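/- arXiv:2003.06157 — 2 statements merged into one kernel-verified Lean document; each statement's English description precedes it below -/
import Mathlib

section
/- Let X be a measurable space, let μ and ν be finite measures on X, let p > 0, and let u, v : X → ℝ be measurable functions with u ≤ 0 and v ≤ 0. Assume that for every s > 0 one has ν({x ∈ X : u(x) < v(x) − s}) ≤ μ({x ∈ X : u(x) < −s}). Then ∫_X (−u)^p dν ≤ 2^p ∫_X (−u)^p dμ + 2^p ∫_X (−v)^p dν. -/
open MeasureTheory Set ENNReal

/-!
Write `-u ≤ (v - u)⁺ + (-v)`, so pointwise `(-u)^p ≤ 2^p ((v - u)⁺)^p + 2^p (-v)^p`. By the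
layer-cake formula `∫ ((v - u)⁺)^p dν = p ∫₀^∞ t^(p-1) ν{u < v - t} dt`, and the hypothesis bounds
this by `p ∫₀^∞ t^(p-1) μ{u < -t} dt = ∫ (-u)^p dμ`.
-/

theorem lintegral_ofReal_rpow_le_of_meas_lt_le {α : Type*} [MeasurableSpace α]
    {μ ν : Measure α} {f g : α → ℝ} (hf0 : 0 ≤ᵐ[ν] f) (hg0 : 0 ≤ᵐ[μ] g)
    (hf : AEMeasurable f ν) (hg : AEMeasurable g μ) {p : ℝ} (hp : 0 < p)
    (h : ∀ t > 0, ν {x | t < f x} ≤ μ {x | t < g x}) :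
    ∫⁻ x, ENNReal.ofReal (f x ^ p) ∂ν ≤ ∫⁻ x, ENNReal.ofReal (g x ^ p) ∂μ := by
  rw [lintegral_rpow_eq_lintegral_meas_lt_mul ν hf0 hf hp,
    lintegral_rpow_eq_lintegral_meas_lt_mul μ hg0 hg hp]
  refine mul_le_mul_right (setLIntegral_mono' measurableSet_Ioi fun t ht => ?_) _
  exact mul_le_mul_left (h t ht) _

theorem ENNReal.add_rpow_le_two_rpow_mul_add_rpow (a b : ℝ≥0∞) {p : ℝ} (hp : 0 ≤ p) :
    (a + b) ^ p ≤ 2 ^ p * (a ^ p + b ^ p) :=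
  calc (a + b) ^ p ≤ (2 * max a b) ^ p := by
        gcongr
        rw [two_mul]
        exact add_le_add (le_max_left a b) (le_max_right a b)
    _ = 2 ^ p * max a b ^ p := ENNReal.mul_rpow_of_nonneg _ _ hp
    _ ≤ 2 ^ p * (a ^ p + b ^ p) := by
        gcongr
        rcases max_choice a b with h | h <;> rw [h]
        exacts [le_self_add, le_add_self]

theorem ENNReal.ofReal_add_rpow_le {a b : ℝ} (ha : 0 ≤ a) (hb : 0 ≤ b) {p : ℝ} (hp : 0 ≤ p) :
    ENNReal.ofReal ((a + b) ^ p) ≤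
      2 ^ p * ENNReal.ofReal (a ^ p) + 2 ^ p * ENNReal.ofReal (b ^ p) :=
  calc ENNReal.ofReal ((a + b) ^ p) = (ENNReal.ofReal a + ENNReal.ofReal b) ^ p := by
        rw [← ENNReal.ofReal_rpow_of_nonneg (add_nonneg ha hb) hp, ENNReal.ofReal_add ha hb]
    _ ≤ 2 ^ p * (ENNReal.ofReal a ^ p + ENNReal.ofReal b ^ p) :=
        ENNReal.add_rpow_le_two_rpow_mul_add_rpow _ _ hp
    _ = 2 ^ p * ENNReal.ofReal (a ^ p) + 2 ^ p * ENNReal.ofReal (b ^ p) := by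
        rw [ENNReal.ofReal_rpow_of_nonneg ha hp, ENNReal.ofReal_rpow_of_nonneg hb hp, mul_add]

theorem stmt1_general {X : Type*} [MeasurableSpace X] (μ ν : Measure X)
    (p : ℝ) (hp : 0 < p)
    (u v : X → ℝ) (hu : Measurable u) (hv : Measurable v)
    (hu0 : ∀ x, u x ≤ 0) (hv0 : ∀ x, v x ≤ 0)
    (hcomp : ∀ s : ℝ, 0 < s → ν {x | u x < v x - s} ≤ μ {x | u x < -s}) :
    ∫⁻ x, ENNReal.ofReal ((-u x) ^ p) ∂ν ≤
      (2 : ℝ≥0∞) ^ p * ∫⁻ x, ENNReal.ofReal ((-u x) ^ p) ∂μ +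
        (2 : ℝ≥0∞) ^ p * ∫⁻ x, ENNReal.ofReal ((-v x) ^ p) ∂ν := by
  set w : X → ℝ := fun x => max (v x - u x) 0
  have hw : Measurable w := (hv.sub hu).max measurable_const
  have hlayer : ∫⁻ x, ENNReal.ofReal (w x ^ p) ∂ν ≤ ∫⁻ x, ENNReal.ofReal ((-u x) ^ p) ∂μ :=
    lintegral_ofReal_rpow_le_of_meas_lt_le (ae_of_all _ fun x => le_max_right _ _)
      (ae_of_all _ fun x => neg_nonneg.2 (hu0 x)) hw.aemeasurable hu.neg.aemeasurable hp
      fun t ht => by simpa [w, lt_max_iff, ht.not_gt, lt_sub_comm, lt_neg] using hcomp t ht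
  have hpoint : ∀ x, ENNReal.ofReal ((-u x) ^ p) ≤
      2 ^ p * ENNReal.ofReal (w x ^ p) + 2 ^ p * ENNReal.ofReal ((-v x) ^ p) := fun x =>
    (ENNReal.ofReal_le_ofReal <| Real.rpow_le_rpow (neg_nonneg.2 (hu0 x))
      (by linarith [le_max_left (v x - u x) 0]) hp.le).trans
      (ENNReal.ofReal_add_rpow_le (le_max_right _ _) (neg_nonneg.2 (hv0 x)) hp.le)
  have hwp : Measurable fun x => ENNReal.ofReal (w x ^ p) :=
    (hw.pow_const p).ennreal_ofReal
  have hvp : Measurable fun x => ENNReal.ofReal ((-v x) ^ p) :=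
    (hv.neg.pow_const p).ennreal_ofReal
  calc ∫⁻ x, ENNReal.ofReal ((-u x) ^ p) ∂ν
      ≤ ∫⁻ x, (2 ^ p * ENNReal.ofReal (w x ^ p) + 2 ^ p * ENNReal.ofReal ((-v x) ^ p)) ∂ν :=
        lintegral_mono hpoint
    _ = 2 ^ p * ∫⁻ x, ENNReal.ofReal (w x ^ p) ∂ν +
          2 ^ p * ∫⁻ x, ENNReal.ofReal ((-v x) ^ p) ∂ν := by
        rw [lintegral_add_left (hwp.const_mul _), lintegral_const_mul _ hwp,
          lintegral_const_mul _ hvp]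
    _ ≤ _ := by gcongr

/-- Measure-theoretic core of Lemma 3.2: if `ν({u < v - s}) ≤ μ({u < -s})` for all `s > 0`,
then `∫ (-u)^p dν ≤ 2^p ∫ (-u)^p dμ + 2^p ∫ (-v)^p dν`. -/
theorem stmt1 {X : Type*} [MeasurableSpace X] (μ ν : Measure X)
    [IsFiniteMeasure μ] [IsFiniteMeasure ν] (p : ℝ) (hp : 0 < p)
    (u v : X → ℝ) (hu : Measurable u) (hv : Measurable v)
    (hu0 : ∀ x, u x ≤ 0) (hv0 : ∀ x, v x ≤ 0)
    (hcomp : ∀ s : ℝ, 0 < s → ν {x | u x < v x - s} ≤ μ {x | u x < -s}) :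
    ∫⁻ x, ENNReal.ofReal ((-u x) ^ p) ∂ν ≤
      (2 : ℝ≥0∞) ^ p * ∫⁻ x, ENNReal.ofReal ((-u x) ^ p) ∂μ +
        (2 : ℝ≥0∞) ^ p * ∫⁻ x, ENNReal.ofReal ((-v x) ^ p) ∂ν :=
  stmt1_general μ ν p hp u v hu hv hu0 hv0 hcomp
end

section
/- Let p, α, q, Q be real numbers with p ≥ 1, α > 1 and 1 < q < Q < p·α. Then there exists a constant C > 0, depending only on p, q, Q, α, with the following property: for every measurable space X with a probability measure μ, every measurable function u : X → ℝ with u ≤ −1, and all real constants E ≥ 1 and M > 0 such that ∫_X (−u) dμ ≤ M and μ({x ∈ X : u(x) < −t}) ≤ E^α·(t−1)^{−pα} for all t ≥ 2, one has ∫_X (−u)^q dμ ≤ C · E^{α(q−1)/(Q−1)} · M^{(Q−q)/(Q−1)}. -/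
open MeasureTheory Set ENNReal

/-!
With `f = -u ≥ 1` and `θ = (q - 1) / (Q - 1)` we have `q = θ Q + (1 - θ)`, so Hölder's
inequality gives `∫ f^q ≤ (∫ f^Q)^θ (∫ f)^(1-θ)`. Since `Q < pα`, the layer-cake formula turns
the tail bound into `∫ f^Q ≤ K E^α` with `K = 2^Q pα / (pα - Q)`, and `C = K^θ` works.
-/

theorem setLIntegral_Ioc_zero_rpow {s c : ℝ} (hs : -1 < s) (hc : 0 ≤ c) :
    ∫⁻ t in Ioc 0 c, ENNReal.ofReal (t ^ s) = ENNReal.ofReal (c ^ (s + 1) / (s + 1)) := by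
  have hint : IntegrableOn (fun t : ℝ ↦ t ^ s) (Ioc 0 c) :=
    (intervalIntegrable_iff_integrableOn_Ioc_of_le hc).1
      (intervalIntegral.intervalIntegrable_rpow' hs)
  rw [← ofReal_integral_eq_lintegral_ofReal hint
      ((ae_restrict_iff' measurableSet_Ioc).2
        (ae_of_all _ fun t ht ↦ Real.rpow_nonneg ht.1.le s)),
    ← intervalIntegral.integral_of_le hc, integral_rpow (Or.inl hs),
    Real.zero_rpow (by linarith), sub_zero]

theorem setLIntegral_Ioi_rpow {s c : ℝ} (hs : s < -1) (hc : 0 < c) :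
    ∫⁻ t in Ioi c, ENNReal.ofReal (t ^ s) = ENNReal.ofReal (-c ^ (s + 1) / (s + 1)) := by
  rw [← ofReal_integral_eq_lintegral_ofReal (integrableOn_Ioi_rpow_of_lt hs hc)
      ((ae_restrict_iff' measurableSet_Ioi).2
        (ae_of_all _ fun t ht ↦ Real.rpow_nonneg (hc.trans ht).le s)),
    integral_Ioi_rpow_of_lt hs hc]

theorem lintegral_rpow_le_of_meas_lt_le {X : Type*} [MeasurableSpace X] {μ : Measure X}
    [IsProbabilityMeasure μ] {f : X → ℝ} (hf : Measurable f) (hf0 : ∀ x, 0 ≤ f x)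
    {Q β A c : ℝ} (hQ : 0 < Q) (hQβ : Q < β) (hA : 0 ≤ A) (hc : 0 < c)
    (htail : ∀ t, c ≤ t → μ {x | t < f x} ≤ ENNReal.ofReal (A * t ^ (-β))) :
    ∫⁻ x, ENNReal.ofReal (f x ^ Q) ∂μ ≤
      ENNReal.ofReal (c ^ Q + Q * A * c ^ (Q - β) / (β - Q)) := by
  have hbulk : ∫⁻ t in Ioc 0 c, μ {x | t < f x} * ENNReal.ofReal (t ^ (Q - 1)) ≤
      ENNReal.ofReal (c ^ Q / Q) := by
    calc _ ≤ ∫⁻ t in Ioc 0 c, ENNReal.ofReal (t ^ (Q - 1)) :=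
          lintegral_mono fun t ↦ mul_le_of_le_one_left' prob_le_one
      _ = _ := by rw [setLIntegral_Ioc_zero_rpow (by linarith) hc.le, sub_add_cancel]
  have hfar : ∫⁻ t in Ioi c, μ {x | t < f x} * ENNReal.ofReal (t ^ (Q - 1)) ≤
      ENNReal.ofReal (A * (c ^ (Q - β) / (β - Q))) := by
    calc _ ≤ ∫⁻ t in Ioi c, ENNReal.ofReal A * ENNReal.ofReal (t ^ (Q - 1 - β)) := by
          refine setLIntegral_mono' measurableSet_Ioi fun t ht ↦ ?_
          have ht0 : 0 < t := hc.trans ht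
          grw [htail t ht.le, ← ENNReal.ofReal_mul hA, ← ENNReal.ofReal_mul (by positivity),
            mul_assoc, ← Real.rpow_add ht0, neg_add_eq_sub]
      _ = _ := by
          rw [lintegral_const_mul' _ _ ofReal_ne_top, setLIntegral_Ioi_rpow (by linarith) hc,
            ← ENNReal.ofReal_mul hA]
          congr 2
          rw [show Q - 1 - β + 1 = Q - β by ring, neg_div, ← div_neg, neg_sub]
  rw [lintegral_rpow_eq_lintegral_meas_lt_mul μ (ae_of_all _ hf0) hf.aemeasurable hQ,
    ← Ioc_union_Ioi_eq_Ioi hc.le, lintegral_union measurableSet_Ioi Ioc_disjoint_Ioi_same]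
  calc _ ≤ ENNReal.ofReal Q *
        (ENNReal.ofReal (c ^ Q / Q) + ENNReal.ofReal (A * (c ^ (Q - β) / (β - Q)))) := by
        gcongr
    _ = _ := by
      rw [← ENNReal.ofReal_add (by positivity) (by have := sub_pos.2 hQβ; positivity),
        ← ENNReal.ofReal_mul hQ.le]
      congr 1
      field_simp

theorem sub_one_rpow_neg_le_two_rpow_mul {t β : ℝ} (ht : 2 ≤ t) (hβ : 0 ≤ β) :
    (t - 1) ^ (-β) ≤ 2 ^ β * t ^ (-β) := by
  calc (t - 1) ^ (-β) ≤ (t / 2) ^ (-β) :=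
        Real.rpow_le_rpow_of_nonpos (by linarith) (by linarith) (by linarith)
    _ = 2 ^ β * t ^ (-β) := by
        rw [Real.div_rpow (by linarith) zero_le_two, Real.rpow_neg zero_le_two, div_inv_eq_mul,
          mul_comm]

theorem lintegral_rpow_le_of_meas_lt_le_sub_one {X : Type*} [MeasurableSpace X]
    {μ : Measure X} [IsProbabilityMeasure μ] {f : X → ℝ} (hf : Measurable f) (hf0 : ∀ x, 0 ≤ f x)
    {Q β A : ℝ} (hQ : 0 < Q) (hQβ : Q < β) (hA : 1 ≤ A)
    (htail : ∀ t, 2 ≤ t → μ {x | t < f x} ≤ ENNReal.ofReal (A * (t - 1) ^ (-β))) :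
    ∫⁻ x, ENNReal.ofReal (f x ^ Q) ∂μ ≤ ENNReal.ofReal (2 ^ Q * β / (β - Q) * A) := by
  have hβQ : 0 < β - Q := sub_pos.2 hQβ
  refine (lintegral_rpow_le_of_meas_lt_le hf hf0 hQ hQβ (by positivity : 0 ≤ 2 ^ β * A) two_pos
    fun t ht ↦ (htail t ht).trans (ENNReal.ofReal_le_ofReal ?_)).trans
    (ENNReal.ofReal_le_ofReal ?_)
  · rw [mul_assoc, mul_left_comm]
    exact mul_le_mul_of_nonneg_left (sub_one_rpow_neg_le_two_rpow_mul ht (by linarith))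
      (by linarith)
  · have h2 : (2 : ℝ) ^ β * 2 ^ (Q - β) = 2 ^ Q := by
      rw [← Real.rpow_add two_pos, add_sub_cancel]
    have h2Q : (0 : ℝ) < 2 ^ Q := by positivity
    calc 2 ^ Q + Q * (2 ^ β * A) * 2 ^ (Q - β) / (β - Q)
        = 2 ^ Q + Q * 2 ^ Q * A / (β - Q) := by rw [← h2]; ring
      _ ≤ 2 ^ Q * A + Q * 2 ^ Q * A / (β - Q) := by
          gcongr; exact le_mul_of_one_le_right h2Q.le hA
      _ = 2 ^ Q * β / (β - Q) * A := by field_simp; ring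

theorem lintegral_rpow_interpolate_le {X : Type*} [MeasurableSpace X] {μ : Measure X}
    {f : X → ℝ} (hf : Measurable f) (hf0 : ∀ x, 0 < f x) {a b θ : ℝ} (hθ0 : 0 ≤ θ)
    (hθ1 : θ ≤ 1) :
    ∫⁻ x, ENNReal.ofReal (f x ^ (θ * b + (1 - θ) * a)) ∂μ ≤
      (∫⁻ x, ENNReal.ofReal (f x ^ b) ∂μ) ^ θ *
        (∫⁻ x, ENNReal.ofReal (f x ^ a) ∂μ) ^ (1 - θ) := by
  have hsplit : ∀ x, ENNReal.ofReal (f x ^ (θ * b + (1 - θ) * a)) =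
      ENNReal.ofReal (f x ^ b) ^ θ * ENNReal.ofReal (f x ^ a) ^ (1 - θ) := fun x ↦ by
    have hx := (hf0 x).le
    rw [ofReal_rpow_of_nonneg (Real.rpow_nonneg hx _) hθ0,
      ofReal_rpow_of_nonneg (Real.rpow_nonneg hx _) (sub_nonneg.2 hθ1),
      ← ENNReal.ofReal_mul (by positivity), ← Real.rpow_mul hx, ← Real.rpow_mul hx,
      ← Real.rpow_add (hf0 x), mul_comm b, mul_comm a]
  simp_rw [hsplit]
  exact ENNReal.lintegral_mul_norm_pow_le (by fun_prop) (by fun_prop) hθ0 (sub_nonneg.2 hθ1)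
    (add_sub_cancel θ 1)

theorem stmt6_general (p α q Q : ℝ) (hα : 1 < α) (hq : 1 < q) (hqQ : q < Q)
    (hQ : Q < p * α) :
    ∃ C : ℝ, 0 < C ∧
      ∀ (X : Type) (_ : MeasurableSpace X) (μ : Measure X), IsProbabilityMeasure μ →
        ∀ u : X → ℝ, Measurable u → (∀ x, u x ≤ -1) →
          ∀ E M : ℝ, 1 ≤ E → 0 < M →
            (∫⁻ x, ENNReal.ofReal (-u x) ∂μ ≤ ENNReal.ofReal M) →
            (∀ t : ℝ, 2 ≤ t →
              μ {x | u x < -t} ≤ ENNReal.ofReal (E ^ α * (t - 1) ^ (-(p * α)))) →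
            ∫⁻ x, ENNReal.ofReal ((-u x) ^ q) ∂μ ≤
              ENNReal.ofReal
                (C * E ^ (α * (q - 1) / (Q - 1)) * M ^ ((Q - q) / (Q - 1))) := by
  have hQ1 : 0 < Q - 1 := by linarith
  set θ := (q - 1) / (Q - 1) with hθ
  have hθ0 : 0 ≤ θ := div_nonneg (by linarith) hQ1.le
  have hθ1 : θ ≤ 1 := (div_le_one hQ1).2 (by linarith)
  have hq_eq : θ * Q + (1 - θ) * 1 = q := by rw [hθ]; field_simp; ring
  have h1θ : 1 - θ = (Q - q) / (Q - 1) := by rw [hθ]; field_simp; ring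
  set K := 2 ^ Q * (p * α) / (p * α - Q)
  have hK : 0 < K := div_pos (mul_pos (by positivity) (by linarith)) (by linarith)
  refine ⟨K ^ θ, by positivity, ?_⟩
  intro X _ μ _ u hu hu1 E M hE hM hint htail
  have hf : Measurable fun x ↦ -u x := hu.neg
  have hf0 : ∀ x, 0 < -u x := fun x ↦ by linarith [hu1 x]
  have hmoment : ∫⁻ x, ENNReal.ofReal ((-u x) ^ Q) ∂μ ≤ ENNReal.ofReal (K * E ^ α) :=
    lintegral_rpow_le_of_meas_lt_le_sub_one hf (fun x ↦ (hf0 x).le) (by linarith) hQ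
      (Real.one_le_rpow hE (by linarith)) fun t ht ↦ by simpa only [lt_neg] using htail t ht
  calc ∫⁻ x, ENNReal.ofReal ((-u x) ^ q) ∂μ
      = ∫⁻ x, ENNReal.ofReal ((-u x) ^ (θ * Q + (1 - θ) * 1)) ∂μ := by rw [hq_eq]
    _ ≤ (∫⁻ x, ENNReal.ofReal ((-u x) ^ Q) ∂μ) ^ θ *
          (∫⁻ x, ENNReal.ofReal ((-u x) ^ (1 : ℝ)) ∂μ) ^ (1 - θ) :=
        lintegral_rpow_interpolate_le hf hf0 hθ0 hθ1
    _ ≤ ENNReal.ofReal (K * E ^ α) ^ θ * ENNReal.ofReal M ^ (1 - θ) := by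
        simp_rw [Real.rpow_one]; gcongr
    _ = _ := by
        rw [ofReal_rpow_of_nonneg (by positivity) hθ0, ofReal_rpow_of_nonneg hM.le (by linarith),
          ← ENNReal.ofReal_mul (by positivity), Real.mul_rpow hK.le (by positivity),
          ← Real.rpow_mul (by linarith), h1θ, mul_div_assoc]

/-- Quantitative analytic core of Theorem 4.6: if `u ≤ -1`, `∫(-u) dμ ≤ M`, and
`μ({u < -t}) ≤ E^α (t-1)^{-pα}` for `t ≥ 2`, then
`∫(-u)^q dμ ≤ C E^{α(q-1)/(Q-1)} M^{(Q-q)/(Q-1)}` with `C` depending only on `p, q, Q, α`. -/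
theorem stmt6 (p α q Q : ℝ) (hp : 1 ≤ p) (hα : 1 < α) (hq : 1 < q) (hqQ : q < Q)
    (hQ : Q < p * α) :
    ∃ C : ℝ, 0 < C ∧
      ∀ (X : Type) (_ : MeasurableSpace X) (μ : Measure X), IsProbabilityMeasure μ →
        ∀ u : X → ℝ, Measurable u → (∀ x, u x ≤ -1) →
          ∀ E M : ℝ, 1 ≤ E → 0 < M →
            (∫⁻ x, ENNReal.ofReal (-u x) ∂μ ≤ ENNReal.ofReal M) →
            (∀ t : ℝ, 2 ≤ t →
              μ {x | u x < -t} ≤ ENNReal.ofReal (E ^ α * (t - 1) ^ (-(p * α)))) →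
            ∫⁻ x, ENNReal.ofReal ((-u x) ^ q) ∂μ ≤
              ENNReal.ofReal
                (C * E ^ (α * (q - 1) / (Q - 1)) * M ^ ((Q - q) / (Q - 1))) :=
  stmt6_general p α q Q hα hq hqQ hQ
end
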